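/- The F-vector space t = {X ∈ sp_{2n}(F) : X·β = β·X} (the centralizer of β inside sp_{2n}(F)) has dimension exactly n over F. -/

import Mathlib

open Matrix

/-- The matrix `J = [[0, I'ₙ],[−I'ₙ, 0]]` where `I'ₙ` is the antidiagonal identity. -/
def Jmat (R : Type*) [CommRing R] (n : ℕ) : Matrix (Fin (2*n)) (Fin (2*n)) R :=
  Matrix.of fun i j =>
    if (i : ℕ) + (j : ℕ) = 2*n - 1 then (if (i : ℕ) < n then (1 : R) else -1) else 0

/-- The symplectic group `Sp_{2n}(R)` as a set of matrices. -/
def SpSet (n : ℕ) (R : Type*) [CommRing R] : Set (Matrix (Fin (2*n)) (Fin (2*n)) R) :=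
  {g | IsUnit g.det ∧ g * Jmat R n * gᵀ = Jmat R n}

/-- The symplectic Lie algebra `sp_{2n}(R)` as a set of matrices. -/
def spSet (n : ℕ) (R : Type*) [CommRing R] : Set (Matrix (Fin (2*n)) (Fin (2*n)) R) :=
  {X | X * Jmat R n + Jmat R n * Xᵀ = 0}

/-!
The characteristic polynomial `p` of `β` is irreducible, so `K = F[x]/(p)` acts on `F^{2n}` through
`x ↦ β`, making it a one-dimensional `K`-vector space; hence the centralizer of `β` is the image
of `K`. The symplectic adjoint `X ↦ J⁻¹XᵀJ` reverses products and sends `β` to `-β`, so on this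
image it is the automorphism `x ↦ -x` of `K`, and `t` is the image of its `-1`-eigenspace.
Multiplication by `x ≠ 0` swaps the `±1`-eigenspaces, which span `K` since `2 ≠ 0`, so each has
dimension `[K : F] / 2 = n`.
-/

open Polynomial Module

theorem Jmat_mul_self (R : Type*) [CommRing R] (n : ℕ) : Jmat R n * Jmat R n = -1 := by
  ext i j
  have hi := i.isLt
  have hj := j.isLt
  -- the only nonzero term of row `i` of `J` sits in column `2n - 1 - i`
  rw [Matrix.mul_apply, Finset.sum_eq_single_of_mem (⟨2*n-1-(i:ℕ), by omega⟩ : Fin (2*n))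
    (Finset.mem_univ _)]
  · rcases eq_or_ne i j with rfl | hij
    · have h1 : (i:ℕ) + (2*n-1-(i:ℕ)) = 2*n-1 := by omega
      have h2 : (2*n-1-(i:ℕ)) + (i:ℕ) = 2*n-1 := by omega
      by_cases hc : (i:ℕ) < n
      · have hc2 : ¬ (2*n-1-(i:ℕ) < n) := by omega
        simp [Jmat, h1, h2, hc, hc2]
      · have hc2 : 2*n-1-(i:ℕ) < n := by omega
        simp [Jmat, h1, h2, hc, hc2]
    · have h2 : ¬((2*n-1-(i:ℕ)) + (j:ℕ) = 2*n-1) := fun h => hij (Fin.ext (by omega))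
      simp [Jmat, h2, one_apply_ne hij]
  · intro k _ hk
    have hk' : ¬((i:ℕ) + (k:ℕ) = 2*n-1) := fun h => hk (Fin.ext (by simp only; omega))
    simp [Jmat, hk']

namespace AdjoinRoot

variable {R : Type*} [CommRing R] {p : R[X]}

theorem root_ne_zero_of_one_lt_natDegree [IsDomain R] (hp : 1 < p.natDegree) : root p ≠ 0 :=
    fun h => by
  have hdvd : p ∣ X := mk_eq_zero.1 (by rw [mk_X, h])
  have := natDegree_le_of_dvd hdvd X_ne_zero
  rw [natDegree_X] at this
  omega

noncomputable def negRootHom (p : R[X]) (h : aeval (-root p) p = 0) :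
    AdjoinRoot p →ₐ[R] AdjoinRoot p :=
  liftAlgHom p (Algebra.ofId R _) (-root p) h

variable (h : aeval (-root p) p = 0)

theorem negRootHom_root : negRootHom p h (root p) = -root p := liftAlgHom_root _ _ _ _

theorem negRootHom_mul_self : (negRootHom p h).toLinearMap * (negRootHom p h).toLinearMap = 1 := by
  have : (negRootHom p h).comp (negRootHom p h) = AlgHom.id R _ :=
    algHom_ext (by simp [negRootHom_root])
  exact congrArg AlgHom.toLinearMap this

theorem negRootHom_mul_mulLeft_root :
    (negRootHom p h).toLinearMap * LinearMap.mulLeft R (root p) =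
      -(LinearMap.mulLeft R (root p) * (negRootHom p h).toLinearMap) :=
  LinearMap.ext fun k => by simp [negRootHom_root]

end AdjoinRoot

section Involution

open Module.End

variable {F V : Type*} [Field F] [AddCommGroup V] [Module F V] [FiniteDimensional F V]

theorem finrank_eigenspace_one_add_finrank_eigenspace_neg_one {ν : End F V} (hν : ν * ν = 1)
    (h2 : (2 : F) ≠ 0) :
    finrank F (ν.eigenspace 1) + finrank F (ν.eigenspace (-1)) = finrank F V := by
  refine Submodule.finrank_add_eq_of_isCompl ⟨ν.disjoint_genEigenspace ?_ 1 1, ?_⟩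
  · exact fun h => h2 (by linear_combination h)
  · rw [codisjoint_iff, Submodule.eq_top_iff']
    intro x
    have hνx : ν (ν x) = x := by rw [← Module.End.mul_apply, hν, Module.End.one_apply]
    have hx : x = (2 : F)⁻¹ • (x + ν x) + (2 : F)⁻¹ • (x - ν x) := by
      rw [← smul_add, add_add_sub_cancel, ← two_smul F, smul_smul, inv_mul_cancel₀ h2, one_smul]
    rw [hx]
    refine Submodule.add_mem_sup ?_ ?_ <;> rw [mem_eigenspace_iff]
    · rw [map_smul, map_add, hνx, add_comm, one_smul]
    · rw [map_smul, map_sub, hνx, neg_one_smul, ← smul_neg, neg_sub]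

theorem finrank_eigenspace_le_finrank_eigenspace_neg {ν g : End F V} (hg : Function.Injective g)
    (hνg : ν * g = -(g * ν)) (μ : F) :
    finrank F (ν.eigenspace μ) ≤ finrank F (ν.eigenspace (-μ)) := by
  rw [LinearEquiv.finrank_eq (Submodule.equivMapOfInjective g hg _)]
  refine Submodule.finrank_mono ?_
  rintro _ ⟨x, hx, rfl⟩
  rw [SetLike.mem_coe, mem_eigenspace_iff] at hx
  rw [mem_eigenspace_iff, ← Module.End.mul_apply, hνg, LinearMap.neg_apply, Module.End.mul_apply,
    hx, map_smul, neg_smul]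

theorem two_mul_finrank_eigenspace_neg_one {ν g : End F V} (hν : ν * ν = 1) (h2 : (2 : F) ≠ 0)
    (hg : Function.Injective g) (hνg : ν * g = -(g * ν)) :
    2 * finrank F (ν.eigenspace (-1)) = finrank F V := by
  have h₁ := finrank_eigenspace_le_finrank_eigenspace_neg hg hνg 1
  have h₂ := finrank_eigenspace_le_finrank_eigenspace_neg hg hνg (-1)
  rw [neg_neg] at h₂
  have := finrank_eigenspace_one_add_finrank_eigenspace_neg_one hν h2
  omega

end Involution

theorem AlgHom.mem_range_of_forall_commute {F K V : Type*} [Field F] [Field K] [Algebra F K]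
    [FiniteDimensional F K] [AddCommGroup V] [Module F V] [FiniteDimensional F V]
    (φ : K →ₐ[F] Module.End F V) (hdim : finrank F K = finrank F V) {f : Module.End F V}
    (hf : ∀ k, Commute f (φ k)) : f ∈ φ.range := by
  obtain ⟨v, hv⟩ : ∃ v : V, v ≠ 0 :=
    finrank_pos_iff_exists_ne_zero.1 (hdim ▸ finrank_pos)
  -- `k ↦ φ k v` is injective because `K` is a field, hence bijective by counting dimensions
  let orbit : K →ₗ[F] V := LinearMap.applyₗ v ∘ₗ φ.toLinearMap
  have horbit : Function.Surjective orbit := by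
    refine (LinearMap.injective_iff_surjective_of_finrank_eq_finrank hdim).1 ?_
    refine (injective_iff_map_eq_zero _).2 fun k hk => by_contra fun hk0 => hv ?_
    simpa [orbit, ← Module.End.mul_apply, ← map_mul, inv_mul_cancel₀ hk0] using
      congrArg (φ k⁻¹) hk
  obtain ⟨k, hk⟩ := horbit (f v)
  refine ⟨k, LinearMap.ext fun w => ?_⟩
  obtain ⟨c, rfl⟩ := horbit w
  change φ k v = f v at hk
  change φ k (φ c v) = f (φ c v)
  calc φ k (φ c v) = φ c (φ k v) := LinearMap.congr_fun ((Commute.all k c).map φ).eq v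
    _ = f (φ c v) := by rw [hk]; exact (LinearMap.congr_fun (hf c).eq v).symm

namespace Matrix

section SymplecticAdjoint

variable {ι R : Type*} [Fintype ι] [CommRing R]

-- The adjoint for the bilinear form `(x, y) ↦ xᵀ J y` when `J⁻¹ = -J`.
def symplecticAdjoint (J : Matrix ι ι R) : Matrix ι ι R →ₗ[R] Matrix ι ι R where
  toFun X := -(J * Xᵀ * J)
  map_add' X Y := by simp only [transpose_add, Matrix.mul_add, Matrix.add_mul, neg_add]
  map_smul' c X := by simp

theorem symplecticAdjoint_apply (J X : Matrix ι ι R) : symplecticAdjoint J X = -(J * Xᵀ * J) :=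
  rfl

variable [DecidableEq ι] {J : Matrix ι ι R}

theorem symplecticAdjoint_mul (hJ : J * J = -1) (X Y : Matrix ι ι R) :
    symplecticAdjoint J (X * Y) = symplecticAdjoint J Y * symplecticAdjoint J X := by
  simp only [symplecticAdjoint_apply, transpose_mul, neg_mul_neg]
  calc -(J * (Yᵀ * Xᵀ) * J) = J * Yᵀ * (J * J) * Xᵀ * J := by rw [hJ]; noncomm_ring
    _ = J * Yᵀ * J * (J * Xᵀ * J) := by noncomm_ring

theorem symplecticAdjoint_one (hJ : J * J = -1) : symplecticAdjoint J (1 : Matrix ι ι R) = 1 := by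
  rw [symplecticAdjoint_apply, transpose_one, Matrix.mul_one, hJ, neg_neg]

theorem symplecticAdjoint_pow (hJ : J * J = -1) (X : Matrix ι ι R) (k : ℕ) :
    symplecticAdjoint J (X ^ k) = symplecticAdjoint J X ^ k := by
  induction k with
  | zero => exact symplecticAdjoint_one hJ
  | succ k ih => rw [pow_succ, symplecticAdjoint_mul hJ, ih, pow_succ']

theorem symplecticAdjoint_aeval (hJ : J * J = -1) (X : Matrix ι ι R) (q : R[X]) :
    symplecticAdjoint J (aeval X q) = aeval (symplecticAdjoint J X) q := by
  induction q using Polynomial.induction_on' with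
  | add q r hq hr => rw [map_add, map_add, map_add, hq, hr]
  | monomial k a =>
    rw [aeval_monomial, aeval_monomial, ← Algebra.smul_def, ← Algebra.smul_def, map_smul,
      symplecticAdjoint_pow hJ]

theorem mul_add_mul_transpose_eq_zero_iff (hJ : J * J = -1) (X : Matrix ι ι R) :
    X * J + J * Xᵀ = 0 ↔ symplecticAdjoint J X = -X := by
  rw [symplecticAdjoint_apply, neg_inj]
  constructor
  · intro h
    calc J * Xᵀ * J = (X * J + J * Xᵀ) * J - X * (J * J) := by noncomm_ring
      _ = X := by rw [h, hJ]; noncomm_ring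
  · intro h
    calc X * J + J * Xᵀ = (X - J * Xᵀ * J) * J + J * Xᵀ * (J * J) + J * Xᵀ := by noncomm_ring
      _ = 0 := by rw [h, hJ]; noncomm_ring

end SymplecticAdjoint

variable {ι F : Type*} [Fintype ι] [DecidableEq ι] [Field F]

section LiftCharpoly

variable (β : Matrix ι ι F)

noncomputable def liftCharpoly : AdjoinRoot β.charpoly →ₐ[F] Matrix ι ι F :=
  Ideal.Quotient.liftₐ _ (aeval β) fun q hq => by
    obtain ⟨c, rfl⟩ := Ideal.mem_span_singleton'.1 hq
    rw [map_mul, aeval_self_charpoly, mul_zero]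

theorem liftCharpoly_mk (q : F[X]) : liftCharpoly β (AdjoinRoot.mk _ q) = aeval β q := rfl

theorem liftCharpoly_root : liftCharpoly β (AdjoinRoot.root _) = β := by
  rw [← AdjoinRoot.mk_X, liftCharpoly_mk, aeval_X]

theorem finrank_adjoinRoot_charpoly : finrank F (AdjoinRoot β.charpoly) = Fintype.card ι :=
  finrank_quotient_span_eq_natDegree.trans β.charpoly_natDegree_eq_dim

instance : Module.Finite F (AdjoinRoot β.charpoly) := β.charpoly_monic.finite_adjoinRoot

variable [Fact (Irreducible β.charpoly)]

theorem liftCharpoly_injective : Function.Injective (liftCharpoly β) := by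
  have : Nonempty ι := Fintype.card_pos_iff.1 <|
    β.charpoly_natDegree_eq_dim ▸ (Fact.out : Irreducible β.charpoly).natDegree_pos
  exact (liftCharpoly β).toRingHom.injective

theorem commute_iff_exists_liftCharpoly_eq {X : Matrix ι ι F} :
    Commute X β ↔ ∃ k, liftCharpoly β k = X := by
  constructor
  · intro hX
    have hcomm (k : AdjoinRoot β.charpoly) : Commute X (liftCharpoly β k) :=
      AdjoinRoot.induction_on _ k fun q =>
        Algebra.commute_of_mem_adjoin_singleton_of_commute (aeval_mem_adjoin_singleton F β) hX
    obtain ⟨k, hk⟩ := AlgHom.mem_range_of_forall_commute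
      (toLinAlgEquiv'.toAlgHom.comp (liftCharpoly β))
      (by rw [finrank_adjoinRoot_charpoly, finrank_fintype_fun_eq_card])
      fun k => (hcomm k).map (toLinAlgEquiv' (R := F) (n := ι))
    exact ⟨k, toLin'.injective hk⟩
  · rintro ⟨k, rfl⟩
    simpa only [liftCharpoly_root] using
      (Commute.all k (AdjoinRoot.root β.charpoly)).map (liftCharpoly β)

end LiftCharpoly

variable {J β : Matrix ι ι F} (hJ : J * J = -1) (hβ : symplecticAdjoint J β = -β)
  [Fact (Irreducible β.charpoly)]
include hJ hβ

theorem aeval_neg_root_charpoly :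
    aeval (-AdjoinRoot.root β.charpoly) β.charpoly = 0 := by
  apply liftCharpoly_injective β
  rw [← aeval_algHom_apply, map_neg, liftCharpoly_root, ← hβ, ← symplecticAdjoint_aeval hJ,
    aeval_self_charpoly, map_zero, map_zero]

theorem symplecticAdjoint_liftCharpoly (k : AdjoinRoot β.charpoly) :
    symplecticAdjoint J (liftCharpoly β k) =
      liftCharpoly β (AdjoinRoot.negRootHom _ (aeval_neg_root_charpoly hJ hβ) k) := by
  refine AdjoinRoot.induction_on _ k fun q => ?_
  rw [← AdjoinRoot.aeval_eq, ← aeval_algHom_apply (liftCharpoly β), liftCharpoly_root,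
    symplecticAdjoint_aeval hJ, hβ, ← aeval_algHom_apply (AdjoinRoot.negRootHom _ _),
    AdjoinRoot.negRootHom_root, ← aeval_algHom_apply (liftCharpoly β), map_neg, liftCharpoly_root]

theorem setOf_mem_sp_and_commute_eq_map :
    {X | X * J + J * Xᵀ = 0 ∧ X * β = β * X} =
      (Module.End.eigenspace (AdjoinRoot.negRootHom _ (aeval_neg_root_charpoly hJ hβ)).toLinearMap
        (-1)).map (liftCharpoly β).toLinearMap := by
  ext X
  simp only [Set.mem_ofPred_eq, mul_add_mul_transpose_eq_zero_iff hJ, SetLike.mem_coe,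
    Submodule.mem_map, Module.End.mem_eigenspace_iff, neg_one_smul, AlgHom.toLinearMap_apply]
  constructor
  · rintro ⟨hsp, hc⟩
    obtain ⟨k, rfl⟩ := (commute_iff_exists_liftCharpoly_eq β).1 hc
    refine ⟨k, liftCharpoly_injective β ?_, rfl⟩
    rwa [symplecticAdjoint_liftCharpoly hJ hβ, ← map_neg] at hsp
  · rintro ⟨k, hk, rfl⟩
    refine ⟨?_, (commute_iff_exists_liftCharpoly_eq β).2 ⟨k, rfl⟩⟩
    rw [symplecticAdjoint_liftCharpoly hJ hβ, hk, map_neg]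

end Matrix

theorem stmt4_general (n : ℕ) (F : Type*) [Field F] (h2 : (2 : F) ≠ 0)
    (β : Matrix (Fin (2*n)) (Fin (2*n)) F) (hβ : β ∈ spSet n F)
    (hirr : Irreducible β.charpoly)
    (t : Submodule F (Matrix (Fin (2*n)) (Fin (2*n)) F))
    (ht : (t : Set (Matrix (Fin (2*n)) (Fin (2*n)) F))
            = {X | X ∈ spSet n F ∧ X * β = β * X}) :
    Module.finrank F ↥t = n := by
  have : Fact (Irreducible β.charpoly) := ⟨hirr⟩
  have hJ := Jmat_mul_self F n
  have hτβ := (mul_add_mul_transpose_eq_zero_iff hJ β).1 hβ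
  have hdeg : β.charpoly.natDegree = 2 * n := by rw [charpoly_natDegree_eq_dim, Fintype.card_fin]
  have hroot : AdjoinRoot.root β.charpoly ≠ 0 :=
    AdjoinRoot.root_ne_zero_of_one_lt_natDegree (by have := hirr.natDegree_pos; omega)
  have hν := aeval_neg_root_charpoly hJ hτβ
  have hdim := two_mul_finrank_eigenspace_neg_one (AdjoinRoot.negRootHom_mul_self hν) h2
    (mul_right_injective₀ hroot) (AdjoinRoot.negRootHom_mul_mulLeft_root hν)
  rw [finrank_adjoinRoot_charpoly, Fintype.card_fin] at hdim
  rw [SetLike.coe_injective (ht.trans (setOf_mem_sp_and_commute_eq_map hJ hτβ)),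
    ← (Submodule.equivMapOfInjective _ (liftCharpoly_injective β) _).finrank_eq]
  omega

/-- The centralizer of `β` inside `sp_{2n}(F)` has dimension exactly `n` over `F`. -/
theorem stmt4 (n : ℕ) (hn : 1 ≤ n) (F : Type*) [Field F] (h2 : (2 : F) ≠ 0)
    (β : Matrix (Fin (2*n)) (Fin (2*n)) F) (hβ : β ∈ spSet n F)
    (hirr : Irreducible β.charpoly)
    (t : Submodule F (Matrix (Fin (2*n)) (Fin (2*n)) F))
    (ht : (t : Set (Matrix (Fin (2*n)) (Fin (2*n)) F))
            = {X | X ∈ spSet n F ∧ X * β = β * X}) :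
    Module.finrank F ↥t = n :=
  stmt4_general n F h2 β hβ hirr t ht
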